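/- arXiv:2505.20274 — 3 statements merged into one kernel-verified Lean document; each statement's English description precedes it below -/
import Mathlib

section
/- Let d ≥ 3, let q, v be unit vectors in R^d with angle φ ∈ (0, π), and let u be drawn uniformly from the cross-section C = {u ∈ S^{d-1} : ⟨u, q⟩ = cos ψ} with ψ ∈ (0, π). Then for x ∈ [cos(φ+ψ), cos(φ-ψ)], the CDF of X = ⟨v, u⟩ satisfies P(X ≤ x) = I_t((d-2)/2, (d-2)/2), where t = 1/2 + (x - cos φ cos ψ)/(2 sin φ sin ψ) and I_t denotes the regularized incomplete Beta function. -/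
/-!
Write `v = cos φ • q + sin φ • f w` with `w` a unit vector (possible because `f` maps onto `qᗮ`).
Then `X = cos φ cos ψ + sin φ sin ψ ⟪w, ω⟫`, so the claim is about the law of one coordinate of a
uniform point `ω` of the unit sphere of `ℝ^(n+1)`, `n = d - 2`.

By the construction of the surface measure, the cap `{⟪w, ω⟫ ≤ y}` has measure
`vol K / vol B^(n+1)`, where `K = {x : ‖x‖ < 1, ⟪w, x⟫ ≤ y ‖x‖}` is the cone over it. The slices of
`K` by the hyperplanes `⟪w, x⟫ = t` are balls, balls cut down by the cone, or annuli in `ℝ^n`, of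
radii `√(1 - t²)` and `t √(1 - y²) / y`. Integrating their volumes, and integrating by parts once,
gives `vol K = vol B^n · n / (n + 1) · ∫_{-1}^y (1 - t²)^(n/2 - 1) dt`; the substitution
`t = 2s - 1` and Legendre's duplication formula turn this into `I_{(1+y)/2}(n/2, n/2)`.
-/

open MeasureTheory Measure Metric Real Set
open scoped RealInnerProductSpace ENNReal NNReal

/-- The uniform (normalized surface) probability measure on the unit sphere
in `EuclideanSpace ℝ (Fin n)`. -/
noncomputable def uniformSphere (n : ℕ) :
    Measure (Metric.sphere (0 : EuclideanSpace ℝ (Fin n)) 1) :=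
  ((volume : Measure (EuclideanSpace ℝ (Fin n))).toSphere Set.univ)⁻¹ •
    (volume : Measure (EuclideanSpace ℝ (Fin n))).toSphere

/-- The Beta distribution with parameters `a` and `b`. -/
noncomputable def betaMeasure (a b : ℝ) : Measure ℝ :=
  volume.withDensity fun t =>
    ENNReal.ofReal ((Set.Ioo (0:ℝ) 1).indicator
      (fun t => Real.Gamma (a + b) / (Real.Gamma a * Real.Gamma b) *
        t ^ (a - 1) * (1 - t) ^ (b - 1)) t)

/-- The regularized incomplete Beta function `I_t(a, b)` (equal to `0` for `t ≤ 0`). -/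
noncomputable def regIncBeta (a b t : ℝ) : ℝ :=
  (∫ s in Set.Ioc (0:ℝ) t, s ^ (a - 1) * (1 - s) ^ (b - 1)) /
    (Real.Gamma a * Real.Gamma b / Real.Gamma (a + b))

local notation "𝔼" n:max => EuclideanSpace ℝ (Fin n)

lemma intervalIntegrable_one_sub_sq_rpow {p : ℝ} (hp : -1 < p) {a b : ℝ}
    (ha : a ∈ Icc (-1 : ℝ) 1) (hb : b ∈ Icc (-1 : ℝ) 1) :
    IntervalIntegrable (fun t : ℝ => (1 - t ^ 2) ^ p) volume a b := by
  have right : IntervalIntegrable (fun t : ℝ => (1 - t ^ 2) ^ p) volume 0 1 := by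
    have h : IntervalIntegrable (fun t : ℝ => (1 - t) ^ p) volume 0 1 := by
      simpa using
        ((intervalIntegral.intervalIntegrable_rpow' hp (a := 0) (b := 1)).comp_sub_left 1).symm
    refine (h.mul_continuousOn (g := fun t => (1 + t) ^ p) ?_).congr fun t ht => ?_
    · refine ContinuousOn.rpow_const (by fun_prop) fun t ht => Or.inl ?_
      rw [uIcc_of_le zero_le_one] at ht
      linarith [ht.1]
    · rw [uIoc_of_le zero_le_one] at ht
      rw [← mul_rpow (by linarith [ht.2]) (by linarith [ht.1])]
      ring_nf
  have left : IntervalIntegrable (fun t : ℝ => (1 - t ^ 2) ^ p) volume (-1) 0 := by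
    simpa using (IntervalIntegrable.iff_comp_neg (by simp)).mp right.symm
  exact (left.trans right).mono_set (uIcc_subset_Icc ha hb |>.trans (by simp [uIcc_of_le]))

lemma integral_one_sub_sq_rpow {c : ℝ} (hc : 0 < c) {y : ℝ} (hy : y ∈ Icc (-1 : ℝ) 1) :
    ∫ t in (-1 : ℝ)..y, (1 - t ^ 2) ^ c =
      2 * c / (2 * c + 1) * (∫ t in (-1 : ℝ)..y, (1 - t ^ 2) ^ (c - 1))
        + y * (1 - y ^ 2) ^ c / (2 * c + 1) := by
  have hint : IntervalIntegrable (fun t : ℝ => (1 - t ^ 2) ^ c) volume (-1) y :=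
    intervalIntegrable_one_sub_sq_rpow (by linarith) (by norm_num) hy
  have hint' : IntervalIntegrable (fun t : ℝ => (1 - t ^ 2) ^ (c - 1)) volume (-1) y :=
    intervalIntegrable_one_sub_sq_rpow (by linarith) (by norm_num) hy
  have hderiv : ∀ t ∈ Ioo (-1 : ℝ) y,
      HasDerivAt (fun t : ℝ => t * (1 - t ^ 2) ^ c / (2 * c + 1))
        ((1 - t ^ 2) ^ c - 2 * c / (2 * c + 1) * (1 - t ^ 2) ^ (c - 1)) t := by
    intro t ht
    have hpos : 0 < 1 - t ^ 2 := by nlinarith [ht.1, ht.2, hy.2]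
    have hpow : HasDerivAt (fun t : ℝ => (1 - t ^ 2) ^ c)
        (c * (1 - t ^ 2) ^ (c - 1) * -(2 * t)) t := by
      convert ((hasDerivAt_pow 2 t).const_sub 1).rpow_const (p := c) (Or.inl hpos.ne') using 1
      simp; ring
    refine (((hasDerivAt_id' t).mul hpow).div_const (2 * c + 1)).congr_deriv ?_
    rw [show (1 - t ^ 2) ^ c = (1 - t ^ 2) ^ (c - 1) * (1 - t ^ 2) by
      rw [← rpow_add_one hpos.ne']; ring_nf]
    field_simp
    ring
  have ftc := intervalIntegral.integral_eq_sub_of_hasDerivAt_of_le hy.1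
    (by fun_prop (disch := positivity)) hderiv (hint.sub (hint'.const_mul _))
  rw [intervalIntegral.integral_sub hint (hint'.const_mul _),
    intervalIntegral.integral_const_mul] at ftc
  norm_num [zero_rpow hc.ne'] at ftc
  linarith

lemma integral_rpow_mul_one_sub_rpow_eq (a : ℝ) {y : ℝ} (hy : y ∈ Icc (-1 : ℝ) 1) :
    ∫ s in Ioc (0 : ℝ) ((1 + y) / 2), s ^ (a - 1) * (1 - s) ^ (a - 1)
      = 2 ^ (1 - 2 * a) * ∫ u in (-1 : ℝ)..y, (1 - u ^ 2) ^ (a - 1) := by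
  have hsub := intervalIntegral.integral_comp_mul_add
    (fun s : ℝ => s ^ (a - 1) * (1 - s) ^ (a - 1)) (one_div_ne_zero two_ne_zero) (1 / 2)
    (a := -1) (b := y)
  have hpt : EqOn
      (fun u : ℝ => (1 / 2 * u + 1 / 2) ^ (a - 1) * (1 - (1 / 2 * u + 1 / 2)) ^ (a - 1))
      (fun u => (2 : ℝ) ^ (2 - 2 * a) * (1 - u ^ 2) ^ (a - 1)) (uIcc (-1) y) := by
    intro u hu
    rw [uIcc_of_le hy.1] at hu
    have hquarter : (2 : ℝ) ^ (2 - 2 * a) = (1 / 4) ^ (a - 1) := by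
      rw [show (1 / 4 : ℝ) = 2 ^ (-2 : ℝ) by norm_num, ← rpow_mul zero_le_two]; ring_nf
    dsimp only
    rw [← mul_rpow (by linarith [hu.1]) (by linarith [hu.2, hy.2]), hquarter,
      ← mul_rpow (by norm_num) (by nlinarith [hu.1, hu.2, hy.2])]
    ring_nf
  rw [intervalIntegral.integral_congr hpt, intervalIntegral.integral_const_mul] at hsub
  rw [← intervalIntegral.integral_of_le (by linarith [hy.1])]
  norm_num at hsub
  rw [show 2 - 2 * a = 1 - 2 * a + 1 by ring, rpow_add_one two_ne_zero] at hsub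
  rw [show (1 + y) / 2 = 1 / 2 * y + 1 / 2 by ring]
  linarith

lemma volume_unitBall_toReal (n : ℕ) :
    (volume (ball (0 : 𝔼 n) 1)).toReal = √π ^ n / Gamma (n / 2 + 1) := by
  rcases Nat.eq_zero_or_pos n with rfl | hn
  · simp [Metric.ball, volume_euclideanSpace_eq_dirac]
  · have : Nonempty (Fin n) := ⟨⟨0, hn⟩⟩
    rw [EuclideanSpace.volume_ball, Fintype.card_fin, ENNReal.ofReal_one, one_pow, one_mul,
      ENNReal.toReal_ofReal (by positivity)]

lemma volume_unitBall_mul_div_volume_unitBall_succ {n : ℕ} (hn : 0 < n) :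
    (volume (ball (0 : 𝔼 n) 1)).toReal * (n / (n + 1))
        / (volume (ball (0 : 𝔼 (n + 1)) 1)).toReal
      = 2 ^ (1 - 2 * (n / 2 : ℝ)) / (Gamma (n / 2) * Gamma (n / 2) / Gamma (n / 2 + n / 2)) := by
  set a : ℝ := n / 2 with ha
  have ha0 : 0 < a := by positivity
  have hGa : 0 < Gamma a := Gamma_pos_of_pos ha0
  have hGa' : 0 < Gamma (a + 1 / 2) := Gamma_pos_of_pos (by positivity)
  have hG2a : 0 < Gamma (2 * a) := Gamma_pos_of_pos (by positivity)
  rw [volume_unitBall_toReal, volume_unitBall_toReal, Nat.cast_add_one, ← ha,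
    show ((n : ℝ) + 1) / 2 + 1 = (a + 1 / 2) + 1 by rw [ha]; ring,
    show (n : ℝ) = 2 * a by rw [ha]; ring, Gamma_add_one ha0.ne',
    Gamma_add_one (by positivity), pow_succ, ← two_mul]
  have hdup := Gamma_mul_Gamma_add_half a
  clear_value a
  generalize Gamma (a + 1 / 2) = G at *
  field_simp
  rw [mul_comm a 2]
  linear_combination hdup

noncomputable def coneRadius (y t : ℝ) : ℝ := t * √(1 - y ^ 2) / y

lemma sq_mul_sq_coneRadius (y t : ℝ) (hy : y ≠ 0) (hy1 : y ^ 2 ≤ 1) :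
    y ^ 2 * coneRadius y t ^ 2 = t ^ 2 * (1 - y ^ 2) := by
  rw [coneRadius, div_pow, mul_pow, sq_sqrt (by linarith)]
  field_simp

lemma coneRadius_nonneg {y t : ℝ} (h : 0 ≤ t / y) : 0 ≤ coneRadius y t := by
  rw [coneRadius, mul_div_right_comm]
  exact mul_nonneg h (sqrt_nonneg _)

lemma le_coneRadius_iff {y t r : ℝ} (hy : y ≠ 0) (hy1 : y ^ 2 ≤ 1)
    (hρ : 0 ≤ coneRadius y t) (hr : 0 ≤ r) :
    r ≤ coneRadius y t ↔ y ^ 2 * r ^ 2 ≤ t ^ 2 * (1 - y ^ 2) := by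
  rw [← sq_mul_sq_coneRadius y t hy hy1, mul_le_mul_iff_right₀ (by positivity),
    sq_le_sq₀ hr hρ]

lemma coneRadius_le_iff {y t r : ℝ} (hy : y ≠ 0) (hy1 : y ^ 2 ≤ 1)
    (hρ : 0 ≤ coneRadius y t) (hr : 0 ≤ r) :
    coneRadius y t ≤ r ↔ t ^ 2 * (1 - y ^ 2) ≤ y ^ 2 * r ^ 2 := by
  rw [← sq_mul_sq_coneRadius y t hy hy1, mul_le_mul_iff_right₀ (by positivity),
    sq_le_sq₀ hρ hr]

lemma coneRadius_le_sqrt {y t : ℝ} (hy : y ≠ 0) (hy1 : y ^ 2 ≤ 1) (hty : t ^ 2 ≤ y ^ 2) :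
    coneRadius y t ≤ √(1 - t ^ 2) := by
  rcases le_or_gt (coneRadius y t) 0 with h | h
  · exact h.trans (sqrt_nonneg _)
  · rw [le_sqrt h.le (by nlinarith), ← mul_le_mul_iff_right₀ (by positivity : 0 < y ^ 2),
      sq_mul_sq_coneRadius y t hy hy1]
    nlinarith

lemma le_mul_sqrt_iff_of_neg {y t r : ℝ} (hy : y < 0) :
    t ≤ y * √(t ^ 2 + r ^ 2) ↔ t ≤ 0 ∧ y ^ 2 * r ^ 2 ≤ t ^ 2 * (1 - y ^ 2) := by
  have hS := sqrt_nonneg (t ^ 2 + r ^ 2)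
  have hS2 := sq_sqrt (by positivity : 0 ≤ t ^ 2 + r ^ 2)
  constructor
  · intro h
    have hyS : y * √(t ^ 2 + r ^ 2) ≤ 0 := mul_nonpos_of_nonpos_of_nonneg hy.le hS
    refine ⟨h.trans hyS, ?_⟩
    nlinarith [mul_nonneg (sub_nonneg.2 h) (by linarith : 0 ≤ -(y * √(t ^ 2 + r ^ 2)) - t)]
  · rintro ⟨ht, h⟩
    by_contra! hlt
    nlinarith [mul_pos (sub_pos.2 hlt) (by nlinarith : 0 < -(y * √(t ^ 2 + r ^ 2)) - t)]

lemma le_mul_sqrt_iff_of_pos {y t r : ℝ} (hy : 0 < y) (ht : 0 < t) :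
    t ≤ y * √(t ^ 2 + r ^ 2) ↔ t ^ 2 * (1 - y ^ 2) ≤ y ^ 2 * r ^ 2 := by
  have hS := sqrt_nonneg (t ^ 2 + r ^ 2)
  have hS2 := sq_sqrt (by positivity : 0 ≤ t ^ 2 + r ^ 2)
  constructor
  · intro h
    nlinarith [mul_le_mul h h ht.le (by positivity)]
  · intro h
    by_contra! hlt
    nlinarith [mul_lt_mul'' hlt hlt (by positivity) (by positivity)]

def sectorSlice (n : ℕ) (y t : ℝ) : Set (𝔼 n) :=
  {x | ‖x‖ < √(1 - t ^ 2) ∧ t ≤ y * √(t ^ 2 + ‖x‖ ^ 2)}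

lemma sqrt_sq_add_sq_le_one {t r : ℝ} (hr : 0 ≤ r) (h : r < √(1 - t ^ 2)) :
    √(t ^ 2 + r ^ 2) ≤ 1 := by
  rw [lt_sqrt hr] at h
  exact sqrt_le_one.mpr (by linarith)

lemma sectorSlice_eq_ball {n : ℕ} {y t : ℝ} (ht : t ≤ min y 0) :
    sectorSlice n y t = ball 0 √(1 - t ^ 2) := by
  ext x
  simp only [sectorSlice, mem_ofPred_eq, mem_ball_zero_iff, and_iff_left_iff_imp]
  intro hx
  have hS := sqrt_sq_add_sq_le_one (norm_nonneg x) hx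
  have hS0 := sqrt_nonneg (t ^ 2 + ‖x‖ ^ 2)
  rcases le_total 0 y with hy | hy
  · nlinarith [min_le_right y 0]
  · nlinarith [min_le_left y 0]

lemma sectorSlice_eq_empty {n : ℕ} {y t : ℝ} (ht : max y 0 < t) : sectorSlice n y t = ∅ := by
  ext x
  simp only [sectorSlice, mem_ofPred_eq, mem_empty_iff_false, iff_false, not_and, not_le]
  intro hx
  have hS := sqrt_sq_add_sq_le_one (norm_nonneg x) hx
  have hS0 := sqrt_nonneg (t ^ 2 + ‖x‖ ^ 2)
  rcases le_total 0 y with hy | hy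
  · nlinarith [le_max_left y 0]
  · nlinarith [le_max_right y 0]

lemma sectorSlice_eq_ball_inter_closedBall {n : ℕ} {y t : ℝ} (hy : -1 ≤ y) (hyt : y < t)
    (ht : t ≤ 0) :
    sectorSlice n y t = ball 0 √(1 - t ^ 2) ∩ closedBall 0 (coneRadius y t) := by
  have hy0 : y < 0 := hyt.trans_le ht
  have hρ := coneRadius_nonneg (div_nonneg_of_nonpos ht hy0.le)
  ext x
  simp only [sectorSlice, mem_ofPred_eq, mem_inter_iff, mem_ball_zero_iff,
    mem_closedBall_zero_iff, le_mul_sqrt_iff_of_neg hy0,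
    le_coneRadius_iff hy0.ne (by nlinarith) hρ (norm_nonneg x)]
  tauto

lemma sectorSlice_eq_ball_diff_ball {n : ℕ} {y t : ℝ} (hy : y ≤ 1) (ht : 0 < t)
    (hty : t ≤ y) : sectorSlice n y t = ball 0 √(1 - t ^ 2) \ ball 0 (coneRadius y t) := by
  have hy0 : 0 < y := ht.trans_le hty
  have hρ := coneRadius_nonneg (div_nonneg ht.le hy0.le)
  ext x
  simp only [sectorSlice, mem_ofPred_eq, mem_sdiff, mem_ball_zero_iff, not_lt,
    le_mul_sqrt_iff_of_pos hy0 ht, coneRadius_le_iff hy0.ne' (by nlinarith) hρ (norm_nonneg x)]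

noncomputable def sectorSliceVol (n : ℕ) (y t : ℝ) : ℝ :=
  if y < 0 then
    if t ≤ y then √(1 - t ^ 2) ^ n else if t ≤ 0 then coneRadius y t ^ n else 0
  else
    if t ≤ 0 then √(1 - t ^ 2) ^ n
    else if t ≤ y then √(1 - t ^ 2) ^ n - coneRadius y t ^ n else 0

lemma volume_sectorSlice {n : ℕ} (hn : 0 < n) {y : ℝ} (hy : y ∈ Icc (-1 : ℝ) 1) (t : ℝ) :
    volume (sectorSlice n y t) = ENNReal.ofReal (sectorSliceVol n y t)
      * volume (ball (0 : 𝔼 n) 1) := by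
  have : Nonempty (Fin n) := ⟨⟨0, hn⟩⟩
  have hball : ∀ r, 0 ≤ r → volume (ball (0 : 𝔼 n) r)
      = ENNReal.ofReal (r ^ n) * volume (ball (0 : 𝔼 n) 1) := by
    intro r hr
    rw [addHaar_ball _ _ hr, finrank_euclideanSpace_fin]
  have hclosedBall : ∀ r, 0 ≤ r → volume (closedBall (0 : 𝔼 n) r)
      = ENNReal.ofReal (r ^ n) * volume (ball (0 : 𝔼 n) 1) := by
    intro r hr
    rw [addHaar_closedBall _ _ hr, finrank_euclideanSpace_fin]
  have hy1 : y ^ 2 ≤ 1 := by nlinarith [hy.1, hy.2]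
  unfold sectorSliceVol
  split_ifs with hy0 hty ht ht' hty'
  · rw [sectorSlice_eq_ball (by simp [hty, hy0.le]), hball _ (sqrt_nonneg _)]
  · have hρ := coneRadius_nonneg (div_nonneg_of_nonpos ht hy0.le)
    have hρR := coneRadius_le_sqrt (t := t) hy0.ne hy1 (by nlinarith)
    rw [sectorSlice_eq_ball_inter_closedBall hy.1 (not_le.mp hty) ht]
    refine le_antisymm ((measure_mono inter_subset_right).trans (hclosedBall _ hρ).le) ?_
    rw [← hball _ hρ]
    exact measure_mono (subset_inter (ball_subset_ball hρR) ball_subset_closedBall)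
  · rw [sectorSlice_eq_empty (by simp [not_le.mp ht, hy0.le]), measure_empty,
      ENNReal.ofReal_zero, zero_mul]
  · rw [sectorSlice_eq_ball (by simp [ht', not_lt.mp hy0]), hball _ (sqrt_nonneg _)]
  · replace ht' := not_le.mp ht'
    have hy0' : 0 < y := ht'.trans_le hty'
    have hρ := coneRadius_nonneg (div_nonneg ht'.le hy0'.le)
    have hρR := coneRadius_le_sqrt (t := t) hy0'.ne' hy1 (by nlinarith)
    rw [sectorSlice_eq_ball_diff_ball hy.2 ht' hty',
      measure_sdiff (ball_subset_ball hρR) measurableSet_ball.nullMeasurableSet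
        measure_ball_lt_top.ne, hball _ hρ, hball _ (sqrt_nonneg _),
      ← ENNReal.sub_mul (fun _ _ => measure_ball_lt_top.ne),
      ← ENNReal.ofReal_sub _ (by positivity)]
  · rw [sectorSlice_eq_empty (by simp [not_le.mp ht', not_le.mp hty']), measure_empty,
      ENNReal.ofReal_zero, zero_mul]

lemma sectorSliceVol_nonneg {n : ℕ} {y : ℝ} (hy : y ∈ Icc (-1 : ℝ) 1) (t : ℝ) :
    0 ≤ sectorSliceVol n y t := by
  unfold sectorSliceVol
  split_ifs with hy0 hty ht ht' hty'
  · positivity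
  · exact pow_nonneg (coneRadius_nonneg (div_nonneg_of_nonpos ht hy0.le)) n
  · exact le_rfl
  · positivity
  · have ht0 := (not_le.mp ht').le
    have hρ := coneRadius_nonneg (div_nonneg ht0 (ht0.trans hty'))
    have hρR := coneRadius_le_sqrt (y := y) (t := t) (by linarith [not_le.mp ht'])
      (by nlinarith [hy.1, hy.2]) (by nlinarith)
    exact sub_nonneg.2 (pow_le_pow_left₀ hρ hρR n)
  · exact le_rfl

lemma sqrt_one_sub_sq_pow_of_le_neg_one {n : ℕ} (hn : 0 < n) {t : ℝ} (ht : t ≤ -1) :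
    √(1 - t ^ 2) ^ n = 0 := by
  rw [sqrt_eq_zero'.mpr (by nlinarith), zero_pow hn.ne']

lemma sectorSliceVol_of_neg {n : ℕ} (hn : 0 < n) {y : ℝ} (hy1 : -1 ≤ y) (hy : y < 0) :
    sectorSliceVol n y = (Ioc (-1) y).indicator (fun t => √(1 - t ^ 2) ^ n)
      + (Ioc y 0).indicator (fun t => coneRadius y t ^ n) := by
  ext t
  by_cases ht : -1 < t
  · by_cases hty : t ≤ y <;> by_cases ht0 : t ≤ 0 <;>
      simp [sectorSliceVol, indicator, hy, ht, hty, ht0]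
  · simp [sectorSliceVol, indicator, hy, ht, (not_lt.mp ht).trans hy1,
      sqrt_one_sub_sq_pow_of_le_neg_one hn (not_lt.mp ht)]

lemma sectorSliceVol_of_nonneg {n : ℕ} (hn : 0 < n) {y : ℝ} (hy : 0 ≤ y) :
    sectorSliceVol n y = (Ioc (-1) 0).indicator (fun t => √(1 - t ^ 2) ^ n)
      + (Ioc 0 y).indicator (fun t => √(1 - t ^ 2) ^ n - coneRadius y t ^ n) := by
  ext t
  by_cases ht : -1 < t
  · by_cases hty : t ≤ y <;> by_cases ht0 : t ≤ 0 <;>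
      simp [sectorSliceVol, indicator, not_lt.mpr hy, ht, hty, ht0]
  · have ht0 : t ≤ 0 := by linarith [not_lt.mp ht]
    simp [sectorSliceVol, indicator, not_lt.mpr hy, ht, ht0,
      sqrt_one_sub_sq_pow_of_le_neg_one hn (not_lt.mp ht)]

lemma integral_coneRadius_pow (n : ℕ) (y : ℝ) :
    ∫ t in (0 : ℝ)..y, coneRadius y t ^ n = y * √(1 - y ^ 2) ^ n / (n + 1) := by
  rcases eq_or_ne y 0 with rfl | hy
  · simp
  simp_rw [coneRadius, div_pow, mul_pow, intervalIntegral.integral_div,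
    intervalIntegral.integral_mul_const, integral_pow]
  field_simp
  ring

lemma integral_sectorSliceVol_eq_sub {n : ℕ} (hn : 0 < n) {y : ℝ}
    (hy : y ∈ Icc (-1 : ℝ) 1) :
    Integrable (sectorSliceVol n y) ∧ ∫ t, sectorSliceVol n y t
      = (∫ t in (-1 : ℝ)..y, √(1 - t ^ 2) ^ n) - y * √(1 - y ^ 2) ^ n / (n + 1) := by
  have hR : Continuous fun t : ℝ => √(1 - t ^ 2) ^ n := by fun_prop
  have hρ : Continuous fun t => coneRadius y t ^ n := by unfold coneRadius; fun_prop
  rw [← integral_coneRadius_pow]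
  rcases lt_or_ge y 0 with hy0 | hy0
  · rw [sectorSliceVol_of_neg hn hy.1 hy0]
    have i₁ : Integrable ((Ioc (-1) y).indicator fun t => √(1 - t ^ 2) ^ n) :=
      hR.integrableOn_Ioc.integrable_indicator measurableSet_Ioc
    have i₂ : Integrable ((Ioc y 0).indicator fun t => coneRadius y t ^ n) :=
      hρ.integrableOn_Ioc.integrable_indicator measurableSet_Ioc
    refine ⟨i₁.add i₂, ?_⟩
    rw [integral_add' i₁ i₂, integral_indicator measurableSet_Ioc,
      integral_indicator measurableSet_Ioc, ← intervalIntegral.integral_of_le hy.1,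
      ← intervalIntegral.integral_of_le hy0.le, intervalIntegral.integral_symm 0 y,
      sub_eq_add_neg]
  · rw [sectorSliceVol_of_nonneg hn hy0]
    have i₁ : Integrable ((Ioc (-1) 0).indicator fun t => √(1 - t ^ 2) ^ n) :=
      hR.integrableOn_Ioc.integrable_indicator measurableSet_Ioc
    have i₂ : Integrable ((Ioc 0 y).indicator fun t => √(1 - t ^ 2) ^ n - coneRadius y t ^ n) :=
      (hR.sub hρ).integrableOn_Ioc.integrable_indicator measurableSet_Ioc
    refine ⟨i₁.add i₂, ?_⟩
    rw [integral_add' i₁ i₂, integral_indicator measurableSet_Ioc,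
      integral_indicator measurableSet_Ioc,
      ← intervalIntegral.integral_of_le (by norm_num : (-1 : ℝ) ≤ 0),
      ← intervalIntegral.integral_of_le hy0,
      intervalIntegral.integral_sub (hR.intervalIntegrable _ _) (hρ.intervalIntegrable _ _),
      ← add_sub_assoc, intervalIntegral.integral_add_adjacent_intervals
        (hR.intervalIntegrable _ _) (hR.intervalIntegrable _ _)]

lemma sqrt_pow_eq_rpow {x : ℝ} (hx : 0 ≤ x) (n : ℕ) : √x ^ n = x ^ ((n : ℝ) / 2) := by
  rw [sqrt_eq_rpow, ← rpow_natCast, ← rpow_mul hx]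
  ring_nf

lemma integral_sectorSliceVol {n : ℕ} (hn : 0 < n) {y : ℝ} (hy : y ∈ Icc (-1 : ℝ) 1) :
    Integrable (sectorSliceVol n y) ∧ ∫ t, sectorSliceVol n y t
      = n / (n + 1) * ∫ t in (-1 : ℝ)..y, (1 - t ^ 2) ^ ((n : ℝ) / 2 - 1) := by
  obtain ⟨hint, heq⟩ := integral_sectorSliceVol_eq_sub hn hy
  refine ⟨hint, ?_⟩
  have hpow : EqOn (fun t : ℝ => √(1 - t ^ 2) ^ n) (fun t => (1 - t ^ 2) ^ ((n : ℝ) / 2))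
      (uIcc (-1) y) := by
    intro t ht
    rw [uIcc_of_le hy.1] at ht
    exact sqrt_pow_eq_rpow (by nlinarith [ht.1, ht.2, hy.2]) n
  rw [heq, intervalIntegral.integral_congr hpow, integral_one_sub_sq_rpow (by positivity) hy,
    sqrt_pow_eq_rpow (by nlinarith [hy.1, hy.2])]
  field_simp
  ring

open scoped Pointwise

variable {E : Type*} [NormedAddCommGroup E] [InnerProductSpace ℝ E]

def sphericalSector (w : E) (y : ℝ) : Set E := {x | ‖x‖ < 1 ∧ ⟪w, x⟫ ≤ y * ‖x‖}

lemma measurableSet_sphericalSector [MeasurableSpace E] [BorelSpace E] (w : E) (y : ℝ) :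
    MeasurableSet (sphericalSector w y) :=
  (measurableSet_lt measurable_norm measurable_const).inter
    (measurableSet_le (continuous_const.inner continuous_id).measurable
      (measurable_const.mul measurable_norm))

lemma Ioo_smul_cap_eq_sphericalSector_diff (w : E) (y : ℝ) :
    Ioo (0 : ℝ) 1 • (Subtype.val '' {ω : sphere (0 : E) 1 | ⟪w, (ω : E)⟫ ≤ y})
      = sphericalSector w y \ {0} := by
  ext x
  simp only [mem_smul, mem_image, mem_ofPred_eq, sphericalSector, mem_sdiff, mem_singleton_iff]
  constructor
  · rintro ⟨r, hr, _, ⟨ω, hω, rfl⟩, rfl⟩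
    have hrω : ‖r • (ω : E)‖ = r := by
      rw [norm_smul, norm_eq_of_mem_sphere ω, mul_one, norm_of_nonneg hr.1.le]
    refine ⟨⟨hrω.symm ▸ hr.2, ?_⟩, fun h => hr.1.ne' (by simpa [h] using hrω.symm)⟩
    rw [inner_smul_right, hrω, mul_comm y]
    exact mul_le_mul_of_nonneg_left hω hr.1.le
  · rintro ⟨⟨hx1, hxy⟩, hx0⟩
    have hx : 0 < ‖x‖ := norm_pos_iff.mpr hx0
    refine ⟨‖x‖, ⟨hx, hx1⟩, _, ⟨⟨‖x‖⁻¹ • x, ?_⟩, ?_, rfl⟩,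
      smul_inv_smul₀ hx.ne' x⟩
    · rw [mem_sphere_zero_iff_norm, norm_smul, norm_inv, norm_norm, inv_mul_cancel₀ hx.ne']
    · rw [inner_smul_right, inv_mul_le_iff₀ hx, mul_comm]
      exact hxy

lemma LinearIsometryEquiv.preimage_sphericalSector {F : Type*} [NormedAddCommGroup F]
    [InnerProductSpace ℝ F] (e : E ≃ₗᵢ[ℝ] F) (w : E) (y : ℝ) :
    e ⁻¹' sphericalSector (e w) y = sphericalSector w y := by
  ext x
  simp [sphericalSector, e.norm_map, e.inner_map_map]

lemma volume_sphericalSector_congr [FiniteDimensional ℝ E] [MeasurableSpace E] [BorelSpace E]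
    {w w' : E} (h : ‖w‖ = ‖w'‖) (y : ℝ) :
    volume (sphericalSector w y) = volume (sphericalSector w' y) := by
  let e := (ℝ ∙ (w - w'))ᗮ.reflection
  rw [← Submodule.reflection_sub h, ← e.preimage_sphericalSector w y]
  exact e.measurePreserving.measure_preimage (measurableSet_sphericalSector _ _).nullMeasurableSet

def euclideanCons {n : ℕ} (t : ℝ) (x : 𝔼 n) : 𝔼 (n + 1) :=
  WithLp.toLp 2 (Fin.cons t x.ofLp)

lemma measurePreserving_euclideanCons (n : ℕ) :
    MeasurePreserving (fun p : ℝ × 𝔼 n => euclideanCons p.1 p.2) := by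
  have h₁ : MeasurePreserving (Prod.map id WithLp.ofLp : ℝ × 𝔼 n → _) :=
    (MeasurePreserving.id _).prod (PiLp.volume_preserving_ofLp _)
  have h₂ := (volume_preserving_piFinSuccAbove (fun _ : Fin (n + 1) => ℝ) 0).symm
  have h₃ := PiLp.volume_preserving_toLp (Fin (n + 1))
  convert h₃.comp (h₂.comp h₁) using 1
  funext p
  simp only [Function.comp_apply, MeasurableEquiv.piFinSuccAbove_symm_apply,
    Fin.insertNthEquiv_zero]
  rfl

lemma norm_euclideanCons {n : ℕ} (t : ℝ) (x : 𝔼 n) :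
    ‖euclideanCons t x‖ = √(t ^ 2 + ‖x‖ ^ 2) := by
  rw [euclideanCons, EuclideanSpace.norm_eq, EuclideanSpace.norm_sq_eq, Fin.sum_univ_succ]
  simp [sq_abs]

lemma volume_eq_lintegral_volume_euclideanCons {n : ℕ} {s : Set (𝔼 (n + 1))}
    (hs : MeasurableSet s) :
    volume s = ∫⁻ t, volume {x : 𝔼 n | euclideanCons t x ∈ s} := by
  have h := measurePreserving_euclideanCons n
  rw [← h.measure_preimage hs.nullMeasurableSet, Measure.volume_eq_prod,
    Measure.prod_apply (hs.preimage h.measurable)]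
  rfl

lemma euclideanCons_mem_sphericalSector_iff {n : ℕ} (y t : ℝ) (x : 𝔼 n) :
    euclideanCons t x ∈ sphericalSector (EuclideanSpace.single 0 1) y
      ↔ x ∈ sectorSlice n y t := by
  simp only [sphericalSector, sectorSlice, mem_ofPred_eq, norm_euclideanCons,
    EuclideanSpace.inner_single_left, map_one, one_mul]
  rw [sqrt_lt' one_pos, lt_sqrt (norm_nonneg x)]
  exact and_congr (by constructor <;> intro h <;> linarith) (by simp [euclideanCons])

lemma volume_sphericalSector {n : ℕ} (hn : 0 < n) {w : 𝔼 (n + 1)} (hw : ‖w‖ = 1) {y : ℝ}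
    (hy : y ∈ Icc (-1 : ℝ) 1) :
    volume (sphericalSector w y)
      = ENNReal.ofReal ((volume (ball (0 : 𝔼 n) 1)).toReal * ∫ t, sectorSliceVol n y t) := by
  have hV : volume (ball (0 : 𝔼 n) 1) ≠ ⊤ := measure_ball_lt_top.ne
  rw [volume_sphericalSector_congr (w' := EuclideanSpace.single 0 1) (by simp [hw]),
    volume_eq_lintegral_volume_euclideanCons (measurableSet_sphericalSector _ _)]
  simp_rw [euclideanCons_mem_sphericalSector_iff, ofPred_mem_eq, volume_sectorSlice hn hy]
  rw [lintegral_mul_const' _ _ hV, ← ofReal_integral_eq_lintegral_ofReal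
      (integral_sectorSliceVol hn hy).1 (.of_forall (sectorSliceVol_nonneg hy)),
    ENNReal.ofReal_mul ENNReal.toReal_nonneg, ENNReal.ofReal_toReal hV, mul_comm]

lemma uniformSphere_apply {n : ℕ} (hn : 0 < n) {A : Set (sphere (0 : 𝔼 n) 1)}
    (hA : MeasurableSet A) :
    uniformSphere n A
      = volume (Ioo (0 : ℝ) 1 • (Subtype.val '' A)) / volume (ball (0 : 𝔼 n) 1) := by
  rw [uniformSphere, Measure.smul_apply, smul_eq_mul, toSphere_apply' _ hA, toSphere_apply_univ,
    finrank_euclideanSpace_fin, ← ENNReal.div_eq_inv_mul,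
    ENNReal.mul_div_mul_left _ _ (by exact_mod_cast hn.ne') (ENNReal.natCast_ne_top n)]

lemma uniformSphere_cap {n : ℕ} (hn : 0 < n) {w : 𝔼 (n + 1)} (hw : ‖w‖ = 1) {y : ℝ}
    (hy : y ∈ Icc (-1 : ℝ) 1) :
    uniformSphere (n + 1) {ω | ⟪w, (ω : 𝔼 (n + 1))⟫ ≤ y}
      = ENNReal.ofReal (regIncBeta (n / 2) (n / 2) ((1 + y) / 2)) := by
  have hmeas : MeasurableSet {ω : sphere (0 : 𝔼 (n + 1)) 1 | ⟪w, (ω : 𝔼 (n + 1))⟫ ≤ y} :=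
    measurableSet_le (continuous_const.inner continuous_subtype_val).measurable measurable_const
  have hV : volume (ball (0 : 𝔼 (n + 1)) 1) ≠ ⊤ := measure_ball_lt_top.ne
  have hV₀ : 0 < (volume (ball (0 : 𝔼 (n + 1)) 1)).toReal :=
    ENNReal.toReal_pos (measure_ball_pos _ _ one_pos).ne' hV
  rw [uniformSphere_apply n.succ_pos hmeas, Ioo_smul_cap_eq_sphericalSector_diff,
    measure_sdiff_null (measure_singleton 0), volume_sphericalSector hn hw hy,
    (integral_sectorSliceVol hn hy).2, ← ENNReal.ofReal_toReal hV,
    ← ENNReal.ofReal_div_of_pos hV₀, regIncBeta, integral_rpow_mul_one_sub_rpow_eq _ hy]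
  generalize ∫ u in (-1 : ℝ)..y, (1 - u ^ 2) ^ ((n : ℝ) / 2 - 1) = Φ
  rw [mul_div_right_comm _ Φ, ← volume_unitBall_mul_div_volume_unitBall_succ hn]
  congr 1
  ring

variable {F : Type*} [NormedAddCommGroup F] [InnerProductSpace ℝ F] [FiniteDimensional ℝ E]

lemma LinearIsometry.range_eq_orthogonal_span_singleton (f : F →ₗᵢ[ℝ] E)
    (hdim : Module.finrank ℝ F + 1 = Module.finrank ℝ E) {q : E} (hq : q ≠ 0)
    (hf : ∀ x, ⟪f x, q⟫ = 0) : LinearMap.range f.toLinearMap = (ℝ ∙ q)ᗮ := by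
  refine Submodule.eq_of_le_of_finrank_eq ?_ ?_
  · rintro _ ⟨x, rfl⟩
    exact Submodule.mem_orthogonal_singleton_iff_inner_left.mpr (hf x)
  · have := (ℝ ∙ q).finrank_add_finrank_orthogonal
    rw [finrank_span_singleton hq] at this
    rw [LinearMap.finrank_range_of_inj f.injective]
    omega

lemma exists_unit_inner_map_eq (f : F →ₗᵢ[ℝ] E)
    (hdim : Module.finrank ℝ F + 1 = Module.finrank ℝ E) {q v : E} (hq : ‖q‖ = 1)
    (hv : ‖v‖ = 1) (hf : ∀ x, ⟪f x, q⟫ = 0) {φ : ℝ} (hφ : 0 < sin φ)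
    (hqv : ⟪q, v⟫ = cos φ) :
    ∃ w : F, ‖w‖ = 1 ∧ ∀ u, ⟪v, f u⟫ = sin φ * ⟪w, u⟫ := by
  have hvq : ⟪v, q⟫ = cos φ := by rw [real_inner_comm, hqv]
  have hmem : v - cos φ • q ∈ LinearMap.range f.toLinearMap := by
    rw [f.range_eq_orthogonal_span_singleton hdim (by rintro rfl; simp at hq) hf,
      Submodule.mem_orthogonal_singleton_iff_inner_right, inner_sub_right, real_inner_smul_right,
      real_inner_self_eq_norm_sq, hq, hqv]
    ring
  obtain ⟨w₀, hw₀ : f w₀ = v - cos φ • q⟩ := hmem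
  have hnorm : ‖w₀‖ = sin φ := by
    rw [← f.norm_map, hw₀, ← sq_eq_sq₀ (norm_nonneg _) hφ.le, norm_sub_sq_real,
      real_inner_smul_right, hvq, norm_smul, hq, hv, norm_eq_abs, mul_one, sq_abs, sin_sq]
    ring
  refine ⟨(sin φ)⁻¹ • w₀, ?_, fun u => ?_⟩
  · rw [norm_smul, norm_inv, norm_of_nonneg hφ.le, hnorm, inv_mul_cancel₀ hφ.ne']
  · rw [real_inner_smul_left, mul_inv_cancel_left₀ hφ.ne', ← f.inner_map_map, hw₀,
      inner_sub_left, real_inner_smul_left, real_inner_comm (f u) q, hf, mul_zero, sub_zero]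

/-- The cross-section `{u ∈ S^{d-1} : ⟪u, q⟫ = cos ψ}` is parametrized as
`u = cos ψ • q + sin ψ • f ω`, with `f` an isometry onto `qᗮ` and `ω` uniform on the unit
sphere of `ℝ^(d-1)`. -/
theorem stmt2 (d : ℕ) (hd : 3 ≤ d) (q v : EuclideanSpace ℝ (Fin d))
    (hq : ‖q‖ = 1) (hv : ‖v‖ = 1)
    (φ ψ : ℝ) (hφ : φ ∈ Set.Ioo 0 π) (hψ : ψ ∈ Set.Ioo 0 π)
    (hqv : ⟪q, v⟫ = Real.cos φ)
    (f : EuclideanSpace ℝ (Fin (d - 1)) →ₗᵢ[ℝ] EuclideanSpace ℝ (Fin d))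
    (hf : ∀ x, ⟪f x, q⟫ = 0)
    (x : ℝ) (hx : x ∈ Set.Icc (Real.cos (φ + ψ)) (Real.cos (φ - ψ))) :
    Measure.map
      (fun ω : Metric.sphere (0 : EuclideanSpace ℝ (Fin (d - 1))) 1 =>
        ⟪v, Real.cos ψ • q + Real.sin ψ • f (ω : EuclideanSpace ℝ (Fin (d - 1)))⟫)
      (uniformSphere (d - 1)) (Set.Iic x)
      = ENNReal.ofReal (regIncBeta (((d : ℝ) - 2) / 2) (((d : ℝ) - 2) / 2)
          (1 / 2 + (x - Real.cos φ * Real.cos ψ) / (2 * Real.sin φ * Real.sin ψ))) := by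
  obtain ⟨n, rfl⟩ : ∃ n, d = n + 2 := ⟨d - 2, by omega⟩
  have hsφ := sin_pos_of_pos_of_lt_pi hφ.1 hφ.2
  have hsψ := sin_pos_of_pos_of_lt_pi hψ.1 hψ.2
  have hss := mul_pos hsφ hsψ
  obtain ⟨w, hw, hvw⟩ := exists_unit_inner_map_eq f (by simp) hq hv hf hsφ hqv
  have hvq : ⟪v, q⟫ = cos φ := by rw [real_inner_comm, hqv]
  set y := (x - cos φ * cos ψ) / (sin φ * sin ψ)
  have hy : y ∈ Icc (-1 : ℝ) 1 := by
    rw [cos_add, cos_sub] at hx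
    constructor
    · rw [le_div_iff₀ hss]; linarith [hx.1]
    · rw [div_le_one hss]; linarith [hx.2]
  rw [Measure.map_apply (by fun_prop) measurableSet_Iic]
  convert uniformSphere_cap (by omega : 0 < n) hw hy using 2
  · rfl
  · ext ω
    simp only [mem_preimage, mem_Iic, mem_ofPred_eq, inner_add_right, real_inner_smul_right,
      hvq, hvw, y, le_div_iff₀ hss]
    constructor <;> intro h <;> linarith
  · rw [show ((n + 2 : ℕ) : ℝ) - 2 = n by push_cast; ring]
    congr 1
    simp only [y]
    field_simp
end

section
/- Let d ≥ 3, θ ∈ (0, π), φ ∈ (0, π/2) with cos φ > 0, and ψ ∈ (0, π/2). Let q, v be unit vectors with angle φ, and let u be drawn uniformly from {u ∈ S^{d-1} : ⟨u, v⟩ = cos ψ}. If cos φ ≥ cos θ, then P[⟨q, u⟩ / cos ψ ≥ cos θ] ≥ 1/2. -/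
open MeasureTheory Measure Metric Real Set
open scoped RealInnerProductSpace ENNReal NNReal

lemma map_neg_toSphere (n : ℕ) :
    Measure.map (fun ω : sphere (0 : EuclideanSpace ℝ (Fin n)) 1 => -ω)
      (volume : Measure (EuclideanSpace ℝ (Fin n))).toSphere
      = (volume : Measure (EuclideanSpace ℝ (Fin n))).toSphere := by
  ext s hs
  rw [Measure.map_apply (continuous_neg.measurable) hs,
    Measure.toSphere_apply' _ hs, Measure.toSphere_apply' _ (hs.preimage continuous_neg.measurable)]
  congr 1
  have h1 : (Subtype.val '' ((fun ω : sphere (0 : EuclideanSpace ℝ (Fin n)) 1 => -ω) ⁻¹' s))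
      = -(Subtype.val '' s) := by
    ext x
    simp only [Set.mem_image, Set.mem_preimage, Set.mem_neg]
    constructor
    · rintro ⟨ω, hω, rfl⟩; exact ⟨-ω, hω, by simp⟩
    · rintro ⟨ω, hω, hx⟩; exact ⟨-ω, by simpa using hω, by simp [hx]⟩
  rw [h1, Set.smul_neg, measure_neg]

/-- for `u` uniform on the cross-section `{u : ⟪u, v⟫ = cos ψ}`
(parametrized by `u = cos ψ • v + sin ψ • f ω` with `ω` uniform on the unit
sphere of `ℝ^(d-1)` and `f` an isometry onto the orthogonal complement of `v`),
if `cos φ ≥ cos θ` then `P[⟪q, u⟫ / cos ψ ≥ cos θ] ≥ 1/2`. -/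
theorem stmt6 (d : ℕ) (hd : 3 ≤ d) (θ φ ψ : ℝ)
    (hθ : θ ∈ Set.Ioo 0 π) (hφ : φ ∈ Set.Ioo 0 (π / 2)) (hcosφ : 0 < Real.cos φ)
    (hψ : ψ ∈ Set.Ioo 0 (π / 2))
    (q v : EuclideanSpace ℝ (Fin d)) (hq : ‖q‖ = 1) (hv : ‖v‖ = 1)
    (hqv : ⟪q, v⟫ = Real.cos φ)
    (f : EuclideanSpace ℝ (Fin (d - 1)) →ₗᵢ[ℝ] EuclideanSpace ℝ (Fin d))
    (hf : ∀ x, ⟪f x, v⟫ = 0)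
    (hcmp : Real.cos θ ≤ Real.cos φ) :
    1 / 2 ≤ uniformSphere (d - 1)
      {ω : Metric.sphere (0 : EuclideanSpace ℝ (Fin (d - 1))) 1 |
        Real.cos θ ≤
          ⟪q, Real.cos ψ • v + Real.sin ψ • f (ω : EuclideanSpace ℝ (Fin (d - 1)))⟫ /
            Real.cos ψ} := by
  have hfr : Module.finrank ℝ (EuclideanSpace ℝ (Fin (d - 1))) = d - 1 :=
    finrank_euclideanSpace_fin
  haveI : Nontrivial (EuclideanSpace ℝ (Fin (d - 1))) :=
    Module.nontrivial_of_finrank_pos (R := ℝ) (by omega : 0 < Module.finrank ℝ _)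
  set ν := (volume : Measure (EuclideanSpace ℝ (Fin (d - 1)))).toSphere with hν
  set c := ν Set.univ with hc
  have hcpos : 0 < c := by
    rw [hc, hν, Measure.toSphere_apply_univ]
    refine ENNReal.mul_pos ?_ (measure_ball_pos _ _ one_pos).ne'
    rw [hfr]
    exact_mod_cast (Nat.cast_ne_zero (R := ℝ≥0∞)).mpr (by omega)
  have hcfin : c ≠ ∞ := measure_ne_top ν _
  set g : sphere (0 : EuclideanSpace ℝ (Fin (d - 1))) 1 → ℝ :=
    fun ω => ⟪q, f (ω : EuclideanSpace ℝ (Fin (d - 1)))⟫ with hg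
  have hgc : Continuous g :=
    continuous_const.inner (f.continuous.comp continuous_subtype_val)
  set A : Set (sphere (0 : EuclideanSpace ℝ (Fin (d - 1))) 1) := {ω | 0 ≤ g ω} with hA
  have hAm : MeasurableSet A := (isClosed_le continuous_const hgc).measurableSet
  have hcosψ : 0 < Real.cos ψ := Real.cos_pos_of_mem_Ioo ⟨by linarith [hψ.1, Real.pi_pos], hψ.2⟩
  have hsinψ : 0 ≤ Real.sin ψ := Real.sin_nonneg_of_nonneg_of_le_pi hψ.1.le
    (by linarith [hψ.2, Real.pi_pos])
  have hsub : A ⊆ {ω : sphere (0 : EuclideanSpace ℝ (Fin (d - 1))) 1 |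
      Real.cos θ ≤ ⟪q, Real.cos ψ • v + Real.sin ψ •
        f (ω : EuclideanSpace ℝ (Fin (d - 1)))⟫ / Real.cos ψ} := by
    intro ω hω
    have hω' : (0:ℝ) ≤ g ω := hω
    have hinner : ⟪q, Real.cos ψ • v + Real.sin ψ • f (ω : EuclideanSpace ℝ (Fin (d - 1)))⟫
        = Real.cos ψ * Real.cos φ + Real.sin ψ * g ω := by
      rw [inner_add_right, real_inner_smul_right, real_inner_smul_right, hqv]
    simp only [Set.mem_setOf_eq, hinner]
    rw [le_div_iff₀ hcosψ]
    nlinarith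
  have hneg : ∀ ω : sphere (0 : EuclideanSpace ℝ (Fin (d - 1))) 1, g (-ω) = -g ω := by
    intro ω
    simp [hg, coe_neg_sphere, inner_neg_right]
  have hBA : {ω : sphere (0 : EuclideanSpace ℝ (Fin (d - 1))) 1 | g ω ≤ 0}
      = (fun ω => -ω) ⁻¹' A := by
    ext ω
    simp [hA, hneg ω, neg_nonneg]
  have hsym : ν {ω : sphere (0 : EuclideanSpace ℝ (Fin (d - 1))) 1 | g ω ≤ 0} = ν A := by
    rw [hBA, ← Measure.map_apply (continuous_neg.measurable) hAm, hν, map_neg_toSphere]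
  have htot : c ≤ 2 * ν A := by
    calc c = ν Set.univ := hc
    _ ≤ ν (A ∪ {ω | g ω ≤ 0}) := by
        refine measure_mono fun ω _ => ?_
        rcases le_total 0 (g ω) with h | h
        · exact Or.inl h
        · exact Or.inr h
    _ ≤ ν A + ν {ω | g ω ≤ 0} := measure_union_le _ _
    _ = 2 * ν A := by rw [hsym]; ring
  have h1 : (1:ℝ≥0∞) ≤ 2 * (c⁻¹ * ν A) := by
    calc (1:ℝ≥0∞) = c⁻¹ * c := (ENNReal.inv_mul_cancel hcpos.ne' hcfin).symm
    _ ≤ c⁻¹ * (2 * ν A) := mul_le_mul_right htot _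
    _ = 2 * (c⁻¹ * ν A) := by ring
  have key : 1 / 2 ≤ uniformSphere (d - 1) A := by
    show (1:ℝ≥0∞) / 2 ≤ (c⁻¹ • ν) A
    rw [Measure.smul_apply, smul_eq_mul,
      ENNReal.div_le_iff (two_ne_zero) (by norm_num), mul_comm]
    exact h1
  exact key.trans (measure_mono hsub)
end

section
/- (Antipodal beats random: stochastic dominance) Let v be uniform on S^{d-1}. Let S_ran consist of m i.i.d. uniform points on S^{d-1}, and let S_sym consist of m/2 i.i.d. uniform points together with their antipodes (m even). Set X = A_{S_ran}(v) and Y = A_{S_sym}(v), where A_S(v) = max_{u∈S} ⟨u,v⟩. Then for every t ∈ (0, 1), P(Y > t) > P(X > t); consequently E[X] < E[Y]. -/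
/-! By rotation invariance, conditionally on `v` every inner product `⟪U i, v⟫` has the law of
`⟪u, x₀⟫` for `u` uniform and `x₀` fixed, independently over `i`. Writing
`q = P(⟪u, x₀⟫ ≤ t)`, `p = P(⟪u, x₀⟫ > t)` and `r = P(|⟪u, x₀⟫| ≤ t)`, this gives
`P(X ≤ t) = q ^ (2k)` and `P(Y ≤ t) = r ^ k`. For `t ≥ 0` the caps `⟪u, x₀⟫ > t` and
`⟪u, x₀⟫ < -t` are disjoint and equally likely, so `r = q - p = q ^ 2 - p ^ 2` (as `q + p = 1`),
which is `< q ^ 2` as soon as `p > 0`, i.e. for `t < 1`. The strict inequality of the means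
follows by the layer cake formula. -/

open MeasureTheory Measure Metric Real Set
open scoped RealInnerProductSpace ENNReal NNReal

open scoped Pointwise
open ProbabilityTheory

section SphereMap

variable {E : Type*} [NormedAddCommGroup E] [NormedSpace ℝ E]

def sphereMap (T : E ≃ₗᵢ[ℝ] E) (u : sphere (0 : E) 1) : sphere (0 : E) 1 :=
  ⟨T u, by simp⟩

@[simp]
lemma coe_sphereMap (T : E ≃ₗᵢ[ℝ] E) (u : sphere (0 : E) 1) : (sphereMap T u : E) = T u := rfl

lemma continuous_sphereMap (T : E ≃ₗᵢ[ℝ] E) : Continuous (sphereMap T) :=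
  (T.continuous.comp continuous_subtype_val).subtype_mk _

lemma image_val_preimage_sphereMap (T : E ≃ₗᵢ[ℝ] E) (A : Set (sphere (0 : E) 1)) :
    Subtype.val '' (sphereMap T ⁻¹' A) = T ⁻¹' (Subtype.val '' A) := by
  ext x
  constructor
  · rintro ⟨u, hu, rfl⟩
    exact ⟨sphereMap T u, hu, rfl⟩
  · rintro ⟨a, ha, hax⟩
    have hx : x ∈ sphere (0 : E) 1 := by
      rw [mem_sphere_zero_iff_norm, ← T.norm_map, ← hax]
      simp
    refine ⟨⟨x, hx⟩, ?_, rfl⟩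
    rwa [mem_preimage, show sphereMap T ⟨x, hx⟩ = a from Subtype.ext hax.symm]

lemma LinearEquiv.smul_set_preimage (T : E ≃ₗ[ℝ] E) (s : Set ℝ) (B : Set E) :
    s • (T ⁻¹' B) = T ⁻¹' (s • B) := by
  ext x
  simp only [mem_smul, mem_preimage]
  constructor
  · rintro ⟨r, hr, b, hb, rfl⟩
    exact ⟨r, hr, T b, hb, (map_smul T r b).symm⟩
  · rintro ⟨r, hr, b, hb, hx⟩
    exact ⟨r, hr, T.symm b, by simpa using hb, T.injective (by simpa using hx)⟩

lemma MeasureTheory.Measure.toSphere_preimage_sphereMap [MeasurableSpace E] [BorelSpace E]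
    {μ : Measure E} {T : E ≃ₗᵢ[ℝ] E} (hT : MeasurePreserving T μ μ)
    {A : Set (sphere (0 : E) 1)} (hA : MeasurableSet A) :
    μ.toSphere (sphereMap T ⁻¹' A) = μ.toSphere A := by
  rw [μ.toSphere_apply' ((continuous_sphereMap T).measurable hA), μ.toSphere_apply' hA,
    image_val_preimage_sphereMap, ← T.coe_toLinearEquiv, LinearEquiv.smul_set_preimage,
    T.coe_toLinearEquiv, hT.measure_preimage_emb T.toHomeomorph.measurableEmbedding]

end SphereMap

lemma abs_inner_le_one_of_mem_sphere {E : Type*} [NormedAddCommGroup E] [InnerProductSpace ℝ E]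
    (u x : sphere (0 : E) 1) : |⟪(u : E), x⟫| ≤ 1 := by
  simpa using abs_real_inner_le_norm (u : E) x

section UniformSphere

variable {d : ℕ}

local notation "𝕊" => sphere (0 : EuclideanSpace ℝ (Fin d)) 1

lemma neZero_of_mem_sphere (x : 𝕊) : NeZero d := ⟨by
  rintro rfl
  simpa [Subsingleton.elim (x : EuclideanSpace ℝ (Fin 0)) 0] using norm_eq_of_mem_sphere x⟩

instance [NeZero d] : IsProbabilityMeasure (uniformSphere d) := by
  have : NeZero (volume : Measure (EuclideanSpace ℝ (Fin d))).toSphere := ⟨toSphere_ne_zero _⟩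
  exact isProbabilityMeasureSMul

instance [NeZero d] : (uniformSphere d).IsOpenPosMeasure :=
  isOpenPosMeasure_smul _ (ENNReal.inv_ne_zero.2 (measure_ne_top _ _))

lemma uniformSphere_preimage_sphereMap
    (T : EuclideanSpace ℝ (Fin d) ≃ₗᵢ[ℝ] EuclideanSpace ℝ (Fin d)) {A : Set 𝕊}
    (hA : MeasurableSet A) :
    uniformSphere d (sphereMap T ⁻¹' A) = uniformSphere d A := by
  simp only [uniformSphere, Measure.smul_apply,
    Measure.toSphere_preimage_sphereMap T.measurePreserving hA]

lemma measurable_inner_left_sphere (x : 𝕊) :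
    Measurable fun u : 𝕊 => ⟪(u : EuclideanSpace ℝ (Fin d)), x⟫ :=
  (continuous_subtype_val.inner continuous_const).measurable

lemma uniformSphere_inner_mem_eq (x y : 𝕊) {A : Set ℝ} (hA : MeasurableSet A) :
    uniformSphere d {u : 𝕊 | ⟪(u : EuclideanSpace ℝ (Fin d)), x⟫ ∈ A} =
      uniformSphere d {u : 𝕊 | ⟪(u : EuclideanSpace ℝ (Fin d)), y⟫ ∈ A} := by
  set T := Submodule.reflection (ℝ ∙ ((x : EuclideanSpace ℝ (Fin d)) - y))ᗮ
  have hTx : T x = y := Submodule.reflection_sub (by simp)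
  have hpre : sphereMap T ⁻¹' {u : 𝕊 | ⟪(u : EuclideanSpace ℝ (Fin d)), y⟫ ∈ A} =
      {u : 𝕊 | ⟪(u : EuclideanSpace ℝ (Fin d)), x⟫ ∈ A} := by
    ext u
    simp only [mem_preimage, mem_ofPred_eq, coe_sphereMap, ← hTx, T.inner_map_map]
  rw [← hpre]
  exact uniformSphere_preimage_sphereMap T (measurable_inner_left_sphere y hA)

lemma uniformSphere_neg_inner_mem_eq (x : 𝕊) {A : Set ℝ} (hA : MeasurableSet A) :
    uniformSphere d {u : 𝕊 | -⟪(u : EuclideanSpace ℝ (Fin d)), x⟫ ∈ A} =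
      uniformSphere d {u : 𝕊 | ⟪(u : EuclideanSpace ℝ (Fin d)), x⟫ ∈ A} := by
  have hpre : sphereMap (LinearIsometryEquiv.neg ℝ) ⁻¹'
      {u : 𝕊 | ⟪(u : EuclideanSpace ℝ (Fin d)), x⟫ ∈ A} =
      {u : 𝕊 | -⟪(u : EuclideanSpace ℝ (Fin d)), x⟫ ∈ A} := by
    ext u
    simp [inner_neg_left]
  rw [← hpre]
  exact uniformSphere_preimage_sphereMap _ (measurable_inner_left_sphere x hA)

lemma uniformSphere_inner_mem_Ioi_pos [NeZero d] (x : 𝕊) {s : ℝ} (hs : s < 1) :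
    0 < uniformSphere d {u : 𝕊 | ⟪(u : EuclideanSpace ℝ (Fin d)), x⟫ ∈ Ioi s} :=
  (isOpen_Ioi.preimage (continuous_subtype_val.inner continuous_const)).measure_pos _
    ⟨x, show ⟪(x : EuclideanSpace ℝ (Fin d)), x⟫ ∈ Ioi s by simpa [real_inner_self_eq_norm_sq]⟩

lemma uniformSphere_inner_mem_Icc_add_sq [NeZero d] (x : 𝕊) {s : ℝ} (hs : 0 ≤ s) :
    uniformSphere d {u : 𝕊 | ⟪(u : EuclideanSpace ℝ (Fin d)), x⟫ ∈ Icc (-s) s} +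
        uniformSphere d {u : 𝕊 | ⟪(u : EuclideanSpace ℝ (Fin d)), x⟫ ∈ Ioi s} ^ 2 =
      uniformSphere d {u : 𝕊 | ⟪(u : EuclideanSpace ℝ (Fin d)), x⟫ ∈ Iic s} ^ 2 := by
  set f : 𝕊 → ℝ := fun u => ⟪(u : EuclideanSpace ℝ (Fin d)), x⟫
  have hf : Measurable f := measurable_inner_left_sphere x
  have hqp : uniformSphere d (f ⁻¹' Iic s) + uniformSphere d (f ⁻¹' Ioi s) = 1 := by
    rw [← compl_Iic, preimage_compl]
    exact prob_add_prob_compl (hf measurableSet_Iic)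
  have hlower : uniformSphere d (f ⁻¹' Iio (-s)) = uniformSphere d (f ⁻¹' Ioi s) := by
    convert uniformSphere_neg_inner_mem_eq x (measurableSet_Ioi (a := s)) using 2
    · ext u
      simp [f, lt_neg]
    · rfl
  have hq : uniformSphere d (f ⁻¹' Iic s) =
      uniformSphere d (f ⁻¹' Ioi s) + uniformSphere d (f ⁻¹' Icc (-s) s) := by
    rw [← hlower, ← measure_union
      ((Iio_disjoint_Ici le_rfl).mono_right Icc_subset_Ici_self |>.preimage f)
      (hf measurableSet_Icc), ← preimage_union, Iio_union_Icc_eq_Iic (by linarith)]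
  change uniformSphere d (f ⁻¹' Icc (-s) s) + uniformSphere d (f ⁻¹' Ioi s) ^ 2 =
    uniformSphere d (f ⁻¹' Iic s) ^ 2
  generalize uniformSphere d (f ⁻¹' Iic s) = q at *
  generalize uniformSphere d (f ⁻¹' Ioi s) = p at *
  generalize uniformSphere d (f ⁻¹' Icc (-s) s) = r at *
  calc r + p ^ 2 = r * (q + p) + p ^ 2 := by rw [hqp, mul_one]
    _ = (p + r) * q := by rw [hq]; ring
    _ = q ^ 2 := by rw [← hq, sq]

lemma uniformSphere_inner_mem_Icc_pow_le [NeZero d] (x : 𝕊) {s : ℝ} (hs : 0 ≤ s) (k : ℕ) :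
    uniformSphere d {u : 𝕊 | ⟪(u : EuclideanSpace ℝ (Fin d)), x⟫ ∈ Icc (-s) s} ^ k ≤
      uniformSphere d {u : 𝕊 | ⟪(u : EuclideanSpace ℝ (Fin d)), x⟫ ∈ Iic s} ^ (2 * k) := by
  rw [pow_mul, ← uniformSphere_inner_mem_Icc_add_sq x hs]
  exact pow_le_pow_left₀ zero_le le_self_add k

lemma uniformSphere_inner_mem_Icc_pow_lt [NeZero d] (x : 𝕊) {s : ℝ} (hs : s ∈ Ico 0 1) {k : ℕ}
    (hk : k ≠ 0) :
    uniformSphere d {u : 𝕊 | ⟪(u : EuclideanSpace ℝ (Fin d)), x⟫ ∈ Icc (-s) s} ^ k <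
      uniformSphere d {u : 𝕊 | ⟪(u : EuclideanSpace ℝ (Fin d)), x⟫ ∈ Iic s} ^ (2 * k) := by
  rw [pow_mul, ← uniformSphere_inner_mem_Icc_add_sq x hs.1]
  exact ENNReal.pow_lt_pow_left hk (ENNReal.lt_add_right (measure_ne_top _ _)
    (pow_ne_zero 2 (uniformSphere_inner_mem_Ioi_pos x hs.2).ne'))

end UniformSphere

section Independence

variable {Ω α ι : Type*} [MeasurableSpace Ω] [MeasurableSpace α] [Fintype ι]
  {μ : Measure Ω} [IsProbabilityMeasure μ]

lemma measure_forall_mem_eq_pow {v : Ω → α} {U : ι → Ω → α} (hv : Measurable v)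
    (hU : ∀ i, Measurable (U i)) (hindep : iIndepFun (fun o : Option ι => Option.elim o v U) μ)
    {ν : Measure α} (hUlaw : ∀ i, μ.map (U i) = ν) {G : Set (α × α)} (hG : MeasurableSet G)
    {q : ℝ≥0∞} (hq : ∀ x, ν (Prod.mk x ⁻¹' G) = q) :
    μ {ω | ∀ i, (v ω, U i ω) ∈ G} = q ^ Fintype.card ι := by
  have hmeas : ∀ o : Option ι, Measurable (Option.elim o v U) := by
    rintro (_ | i)
    exacts [hv, hU i]
  set S : Set (Option ι → α) := {g | ∀ i, (g none, g (some i)) ∈ G}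
  have hS : MeasurableSet S := by
    simp only [S, ofPred_forall]
    exact .iInter fun i => ((measurable_pi_apply _).prodMk (measurable_pi_apply _)) hG
  have hpre : (MeasurableEquiv.piOptionEquivProd fun _ => α).symm ⁻¹' S =
      {p | ∀ i, (p.2, p.1 i) ∈ G} := rfl
  calc μ {ω | ∀ i, (v ω, U i ω) ∈ G}
      = μ.map (fun ω o => Option.elim o v U ω) S :=
        (Measure.map_apply (measurable_pi_lambda _ hmeas) hS).symm
    _ = ((Measure.pi fun i => μ.map (U i)).prod (μ.map v)).map
          (MeasurableEquiv.piOptionEquivProd fun _ => α).symm S := by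
        rw [hindep.map_fun_eq_pi_map fun o => (hmeas o).aemeasurable, ← pi_map_piOptionEquivProd]
        rfl
    _ = ∫⁻ x, (Measure.pi fun i => μ.map (U i)) (univ.pi fun _ => Prod.mk x ⁻¹' G) ∂(μ.map v) := by
        rw [Measure.map_apply (MeasurableEquiv.measurable _) hS, hpre,
          Measure.prod_apply_symm (hpre ▸ (MeasurableEquiv.measurable _) hS)]
        congr! with x
        ext h
        simp
    _ = q ^ Fintype.card ι := by
        have := isProbabilityMeasure_map (μ := μ) hv.aemeasurable
        simp only [Measure.pi_pi]
        simp [hUlaw, hq]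

end Independence

section LayerCake

variable {Ω : Type*} [MeasurableSpace Ω] {μ : Measure Ω} [IsFiniteMeasure μ] {X Y : Ω → ℝ} {c : ℝ}

lemma MeasureTheory.Integrable.integral_sub_eq_setIntegral_measureReal_add_lt
    (hX : Integrable X μ) (hXc : ∀ᵐ ω ∂μ, c ≤ X ω) :
    ∫ ω, X ω ∂μ - μ.real univ * c = ∫ t in Ioi 0, μ.real {ω | t + c < X ω} := by
  have h := Integrable.integral_eq_integral_meas_lt (f := fun ω => X ω - c)
    (hX.sub (integrable_const c)) (by filter_upwards [hXc] with ω hω using sub_nonneg.2 hω)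
  rw [integral_sub hX (integrable_const c), integral_const, smul_eq_mul] at h
  simpa only [lt_sub_iff_add_lt] using h

lemma MeasureTheory.Integrable.integrableOn_measureReal_add_lt (hX : Integrable X μ)
    (hXc : ∀ᵐ ω ∂μ, c ≤ X ω) :
    IntegrableOn (fun t => μ.real {ω | t + c < X ω}) (Ioi 0) := by
  have hint : Integrable (fun ω => X ω - c) μ := hX.sub (integrable_const c)
  have hnn : 0 ≤ᵐ[μ] fun ω => X ω - c := by
    filter_upwards [hXc] with ω hω using sub_nonneg.2 hω
  have hanti : Antitone fun t => μ.real {ω | t + c < X ω} := fun s t hst =>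
    measureReal_mono fun ω (hω : t + c < X ω) => show s + c < X ω by linarith
  refine ⟨hanti.measurable.aestronglyMeasurable, ?_⟩
  rw [hasFiniteIntegral_iff_ofReal (ae_of_all _ fun t => measureReal_nonneg)]
  calc ∫⁻ t in Ioi 0, ENNReal.ofReal (μ.real {ω | t + c < X ω})
      ≤ ∫⁻ t in Ioi 0, μ {ω | t < X ω - c} := by
        refine lintegral_mono fun t => ?_
        simp only [lt_sub_iff_add_lt]
        exact ENNReal.ofReal_toReal_le
    _ = ∫⁻ ω, ENNReal.ofReal (X ω - c) ∂μ :=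
        (lintegral_eq_lintegral_meas_lt μ hnn hint.aemeasurable).symm
    _ < ⊤ := hint.lintegral_lt_top

lemma integral_lt_integral_of_measure_lt_lt (hX : Integrable X μ) (hY : Integrable Y μ)
    (hXc : ∀ᵐ ω ∂μ, c ≤ X ω) (hYc : ∀ᵐ ω ∂μ, c ≤ Y ω)
    (hle : ∀ t, μ {ω | t < X ω} ≤ μ {ω | t < Y ω}) {a b : ℝ} (hca : c ≤ a) (hab : a < b)
    (hlt : ∀ t ∈ Ioo a b, μ {ω | t < X ω} < μ {ω | t < Y ω}) :
    ∫ ω, X ω ∂μ < ∫ ω, Y ω ∂μ := by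
  have hleR : ∀ t, μ.real {ω | t < X ω} ≤ μ.real {ω | t < Y ω} := fun t =>
    ENNReal.toReal_mono (measure_ne_top _ _) (hle t)
  have hltR : ∀ t ∈ Ioo a b, μ.real {ω | t < X ω} < μ.real {ω | t < Y ω} := fun t ht =>
    (ENNReal.toReal_lt_toReal (measure_ne_top _ _) (measure_ne_top _ _)).2 (hlt t ht)
  have hFX := hX.integrableOn_measureReal_add_lt hXc
  have hFY := hY.integrableOn_measureReal_add_lt hYc
  rw [← sub_lt_sub_iff_right (μ.real univ * c),
    hX.integral_sub_eq_setIntegral_measureReal_add_lt hXc,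
    hY.integral_sub_eq_setIntegral_measureReal_add_lt hYc, ← sub_pos, ← integral_sub hFY hFX,
    setIntegral_pos_iff_support_of_nonneg_ae (ae_of_all _ fun t => sub_nonneg.2 (hleR _))
      (hFY.sub hFX)]
  have hsub : Ioo (a - c) (b - c) ⊆ Function.support (fun t => μ.real {ω | t + c < Y ω} -
      μ.real {ω | t + c < X ω}) ∩ Ioi 0 := fun t ht =>
    ⟨sub_ne_zero.2 (hltR (t + c) ⟨by linarith [ht.1], by linarith [ht.2]⟩).ne',
      show 0 < t by linarith [ht.1]⟩
  exact ((measure_Ioo_pos _).2 (by linarith)).trans_le (measure_mono hsub)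

end LayerCake

section Tails

variable {Ω : Type*} [MeasurableSpace Ω] {μ : Measure Ω} [IsProbabilityMeasure μ] {X Y : Ω → ℝ}

lemma measure_lt_eq_one_sub_measure_le (hX : Measurable X) (t : ℝ) :
    μ {ω | t < X ω} = 1 - μ {ω | X ω ≤ t} := by
  rw [← prob_compl_eq_one_sub (measurableSet_le hX measurable_const)]
  congr 1
  ext ω
  simp

lemma measure_lt_le_measure_lt_of_nonneg (hX : Measurable X) (hY : Measurable Y)
    (hY0 : ∀ ω, 0 ≤ Y ω) (h : ∀ t, 0 ≤ t → μ {ω | Y ω ≤ t} ≤ μ {ω | X ω ≤ t}) (t : ℝ) :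
    μ {ω | t < X ω} ≤ μ {ω | t < Y ω} := by
  rcases lt_or_ge t 0 with ht | ht
  · rw [show {ω | t < Y ω} = univ from eq_univ_of_forall fun ω => ht.trans_le (hY0 ω),
      measure_univ]
    exact prob_le_one
  · rw [measure_lt_eq_one_sub_measure_le hX, measure_lt_eq_one_sub_measure_le hY]
    exact tsub_le_tsub_left (h t ht) 1

lemma measure_lt_lt_measure_lt (hX : Measurable X) (hY : Measurable Y) {t : ℝ}
    (h : μ {ω | Y ω ≤ t} < μ {ω | X ω ≤ t}) : μ {ω | t < X ω} < μ {ω | t < Y ω} := by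
  rw [measure_lt_eq_one_sub_measure_le hX, measure_lt_eq_one_sub_measure_le hY]
  exact ((ENNReal.cancel_of_ne ENNReal.one_ne_top).tsub_lt_tsub_iff_left_of_le
    (ENNReal.cancel_of_ne (measure_ne_top _ _)) prob_le_one).2 h

end Tails

lemma Finset.measurable_sup'_apply {ι δ α : Type*} [MeasurableSpace δ] [MeasurableSpace α]
    [SemilatticeSup α] [MeasurableSup₂ α] {s : Finset ι} (hs : s.Nonempty) {f : ι → δ → α}
    (hf : ∀ i ∈ s, Measurable (f i)) : Measurable fun x => s.sup' hs fun i => f i x :=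
  funext (Finset.sup'_apply hs f) ▸ Finset.measurable_sup' hs hf

lemma Finset.abs_sup'_le {ι : Type*} {s : Finset ι} (hs : s.Nonempty) {f : ι → ℝ} {C : ℝ}
    (hf : ∀ i ∈ s, |f i| ≤ C) : |s.sup' hs f| ≤ C := by
  obtain ⟨i, hi⟩ := hs
  exact abs_le.2 ⟨(abs_le.1 (hf i hi)).1.trans (Finset.le_sup' f hi),
    Finset.sup'_le _ _ fun j hj => (abs_le.1 (hf j hj)).2⟩

section Maxima

variable {d : ℕ} {Ω ι : Type*} [Fintype ι]

local notation "𝕊" => sphere (0 : EuclideanSpace ℝ (Fin d)) 1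

-- `A_S(v)` for the random set `S = {U i}`
noncomputable def maxInner (v : Ω → 𝕊) (U : ι → Ω → 𝕊) (hι : (Finset.univ : Finset ι).Nonempty)
    (ω : Ω) : ℝ :=
  Finset.univ.sup' hι fun i => ⟪(U i ω : EuclideanSpace ℝ (Fin d)), v ω⟫

-- `A_S(v)` for the random antipodal set `S = {W i} ∪ {-W i}`
noncomputable def maxInnerSymm (v : Ω → 𝕊) (W : ι → Ω → 𝕊)
    (hι : (Finset.univ : Finset ι).Nonempty) (ω : Ω) : ℝ :=
  Finset.univ.sup' hι fun i => max ⟪(W i ω : EuclideanSpace ℝ (Fin d)), v ω⟫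
    (-⟪(W i ω : EuclideanSpace ℝ (Fin d)), v ω⟫)

variable {v : Ω → sphere (0 : EuclideanSpace ℝ (Fin d)) 1}
  {U : ι → Ω → sphere (0 : EuclideanSpace ℝ (Fin d)) 1} (hι : (Finset.univ : Finset ι).Nonempty)

lemma abs_maxInner_le_one (ω : Ω) : |maxInner v U hι ω| ≤ 1 :=
  Finset.abs_sup'_le hι fun _ _ => abs_inner_le_one_of_mem_sphere _ _

lemma abs_maxInnerSymm_le_one (ω : Ω) : |maxInnerSymm v U hι ω| ≤ 1 :=
  Finset.abs_sup'_le hι fun _ _ => by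
    rw [← abs_eq_max_neg, abs_abs]
    exact abs_inner_le_one_of_mem_sphere _ _

lemma maxInnerSymm_nonneg (ω : Ω) : 0 ≤ maxInnerSymm v U hι ω := by
  obtain ⟨i, hi⟩ := hι
  exact Finset.le_sup'_of_le _ hi ((abs_nonneg _).trans_eq abs_eq_max_neg)

variable [MeasurableSpace Ω]

lemma measurable_maxInner (hv : Measurable v) (hU : ∀ i, Measurable (U i)) :
    Measurable (maxInner v U hι) :=
  Finset.measurable_sup'_apply hι fun i _ =>
    (measurable_subtype_coe.comp (hU i)).inner (measurable_subtype_coe.comp hv)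

lemma measurable_maxInnerSymm (hv : Measurable v) (hU : ∀ i, Measurable (U i)) :
    Measurable (maxInnerSymm v U hι) := by
  have h : ∀ i, Measurable fun ω => ⟪(U i ω : EuclideanSpace ℝ (Fin d)), v ω⟫ := fun i =>
    (measurable_subtype_coe.comp (hU i)).inner (measurable_subtype_coe.comp hv)
  exact Finset.measurable_sup'_apply hι fun i _ => (h i).max (h i).neg

variable {μ : Measure Ω} [IsProbabilityMeasure μ]

lemma integrable_maxInner (hv : Measurable v) (hU : ∀ i, Measurable (U i)) :
    Integrable (maxInner v U hι) μ :=
  .of_bound (measurable_maxInner hι hv hU).aestronglyMeasurable 1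
    (ae_of_all _ (abs_maxInner_le_one hι))

lemma integrable_maxInnerSymm (hv : Measurable v) (hU : ∀ i, Measurable (U i)) :
    Integrable (maxInnerSymm v U hι) μ :=
  .of_bound (measurable_maxInnerSymm hι hv hU).aestronglyMeasurable 1
    (ae_of_all _ (abs_maxInnerSymm_le_one hι))

lemma measure_forall_inner_mem_eq_pow (x₀ : 𝕊) (hv : Measurable v) (hU : ∀ i, Measurable (U i))
    (hindep : iIndepFun (fun o : Option ι => Option.elim o v U) μ)
    (hUlaw : ∀ i, μ.map (U i) = uniformSphere d) {A : Set ℝ} (hA : MeasurableSet A) :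
    μ {ω | ∀ i, ⟪(U i ω : EuclideanSpace ℝ (Fin d)), v ω⟫ ∈ A} =
      uniformSphere d {u : 𝕊 | ⟪(u : EuclideanSpace ℝ (Fin d)), x₀⟫ ∈ A} ^ Fintype.card ι :=
  measure_forall_mem_eq_pow (G := {p : 𝕊 × 𝕊 | ⟪(p.2 : EuclideanSpace ℝ (Fin d)), p.1⟫ ∈ A})
    hv hU hindep hUlaw
    (((continuous_subtype_val.comp continuous_snd).inner
      (continuous_subtype_val.comp continuous_fst)).measurable hA)
    fun x => uniformSphere_inner_mem_eq x x₀ hA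

lemma measure_maxInner_le (x₀ : 𝕊) (hv : Measurable v) (hU : ∀ i, Measurable (U i))
    (hindep : iIndepFun (fun o : Option ι => Option.elim o v U) μ)
    (hUlaw : ∀ i, μ.map (U i) = uniformSphere d) (t : ℝ) :
    μ {ω | maxInner v U hι ω ≤ t} =
      uniformSphere d {u : 𝕊 | ⟪(u : EuclideanSpace ℝ (Fin d)), x₀⟫ ∈ Iic t} ^ Fintype.card ι := by
  rw [← measure_forall_inner_mem_eq_pow x₀ hv hU hindep hUlaw measurableSet_Iic]
  congr 1
  ext ω
  simp [maxInner]

lemma measure_maxInnerSymm_le (x₀ : 𝕊) (hv : Measurable v) (hU : ∀ i, Measurable (U i))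
    (hindep : iIndepFun (fun o : Option ι => Option.elim o v U) μ)
    (hUlaw : ∀ i, μ.map (U i) = uniformSphere d) (t : ℝ) :
    μ {ω | maxInnerSymm v U hι ω ≤ t} =
      uniformSphere d {u : 𝕊 | ⟪(u : EuclideanSpace ℝ (Fin d)), x₀⟫ ∈ Icc (-t) t} ^
        Fintype.card ι := by
  rw [← measure_forall_inner_mem_eq_pow x₀ hv hU hindep hUlaw measurableSet_Icc]
  congr 1
  ext ω
  simp [maxInnerSymm, neg_le, and_comm]

end Maxima

/-- Antipodal beats random: stochastic dominance: with `v`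
uniform on the sphere, `U₁, …, U_m` i.i.d. uniform (independent of `v`) forming
`S_ran`, and `W₁, …, W_{m/2}` i.i.d. uniform (independent of `v`) which together
with their antipodes form `S_sym`, setting `X = A_{S_ran}(v)` and
`Y = A_{S_sym}(v)`, we have `P(Y > t) > P(X > t)` for all `t ∈ (0,1)`, and
consequently `E[X] < E[Y]`. -/
theorem stmt11 (d m k : ℕ) (hmk : m = 2 * k) (hk : 0 < k)
    {Ω : Type*} [MeasurableSpace Ω] (μ : Measure Ω) [IsProbabilityMeasure μ]
    (v : Ω → Metric.sphere (0 : EuclideanSpace ℝ (Fin d)) 1)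
    (U : Fin m → Ω → Metric.sphere (0 : EuclideanSpace ℝ (Fin d)) 1)
    (W : Fin k → Ω → Metric.sphere (0 : EuclideanSpace ℝ (Fin d)) 1)
    (hvm : Measurable v) (hUm : ∀ i, Measurable (U i)) (hWm : ∀ j, Measurable (W j))
    (hUlaw : ∀ i, Measure.map (U i) μ = uniformSphere d)
    (hWlaw : ∀ j, Measure.map (W j) μ = uniformSphere d)
    (hindepU : ProbabilityTheory.iIndepFun
      (fun o : Option (Fin m) => Option.elim o v U) μ)
    (hindepW : ProbabilityTheory.iIndepFun
      (fun o : Option (Fin k) => Option.elim o v W) μ)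
    (X Y : Ω → ℝ)
    (hX : X = fun ω => Finset.univ.sup' ⟨(⟨0, by omega⟩ : Fin m), Finset.mem_univ _⟩
      fun i => ⟪(U i ω : EuclideanSpace ℝ (Fin d)), (v ω : EuclideanSpace ℝ (Fin d))⟫)
    (hY : Y = fun ω => Finset.univ.sup' ⟨(⟨0, hk⟩ : Fin k), Finset.mem_univ _⟩
      fun j => max ⟪(W j ω : EuclideanSpace ℝ (Fin d)), (v ω : EuclideanSpace ℝ (Fin d))⟫
        (-⟪(W j ω : EuclideanSpace ℝ (Fin d)), (v ω : EuclideanSpace ℝ (Fin d))⟫)) :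
    (∀ t ∈ Set.Ioo (0 : ℝ) 1, μ {ω | t < X ω} < μ {ω | t < Y ω}) ∧
    ∫ ω, X ω ∂μ < ∫ ω, Y ω ∂μ := by
  obtain ⟨ω₀⟩ := nonempty_of_isProbabilityMeasure μ
  have := neZero_of_mem_sphere (v ω₀)
  have hm : (Finset.univ : Finset (Fin m)).Nonempty := ⟨⟨0, by omega⟩, Finset.mem_univ _⟩
  have hk' : (Finset.univ : Finset (Fin k)).Nonempty := ⟨⟨0, hk⟩, Finset.mem_univ _⟩
  obtain rfl : X = maxInner v U hm := hX
  obtain rfl : Y = maxInnerSymm v W hk' := hY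
  have hXm := measurable_maxInner hm hvm hUm
  have hYm := measurable_maxInnerSymm hk' hvm hWm
  have hXcdf := measure_maxInner_le hm (v ω₀) hvm hUm hindepU hUlaw
  have hYcdf := measure_maxInnerSymm_le hk' (v ω₀) hvm hWm hindepW hWlaw
  simp only [Fintype.card_fin, hmk] at hXcdf hYcdf
  have htail_lt : ∀ t ∈ Ico (0 : ℝ) 1,
      μ {ω | t < maxInner v U hm ω} < μ {ω | t < maxInnerSymm v W hk' ω} := fun t ht =>
    measure_lt_lt_measure_lt hXm hYm
      (by rw [hXcdf, hYcdf]; exact uniformSphere_inner_mem_Icc_pow_lt _ ht hk.ne')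
  have htail_le : ∀ t, μ {ω | t < maxInner v U hm ω} ≤ μ {ω | t < maxInnerSymm v W hk' ω} :=
    measure_lt_le_measure_lt_of_nonneg hXm hYm (maxInnerSymm_nonneg hk') fun t ht => by
      rw [hXcdf, hYcdf]; exact uniformSphere_inner_mem_Icc_pow_le _ ht k
  refine ⟨fun t ht => htail_lt t (Ioo_subset_Ico_self ht), ?_⟩
  exact integral_lt_integral_of_measure_lt_lt (integrable_maxInner hm hvm hUm)
    (integrable_maxInnerSymm hk' hvm hWm)
    (ae_of_all _ fun ω => (abs_le.1 (abs_maxInner_le_one hm ω)).1)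
    (ae_of_all _ fun ω => (abs_le.1 (abs_maxInnerSymm_le_one hk' ω)).1) htail_le
    (neg_nonpos.2 zero_le_one) one_pos fun t ht => htail_lt t (Ioo_subset_Ico_self ht)
end
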